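/- Frozen-in (homogeneous) solutions of the linearized fluctuation relations in Clebsch form. Work in ℝ³. Let D̄, χ, λ : ℝ³ × ℝ → ℝ and ū : ℝ³ × ℝ → ℝ³ be smooth with D̄ > 0 everywhere, and set ξ := (∇χ × ∇λ)/D̄. Then: (i) div(D̄ξ) = 0 and (ξ·∇)χ = 0 identically (so the linearized density fluctuation D′ = −div(D̄ξ) and scalar fluctuation χ′ = −(ξ·∇)χ both vanish); and (ii) if in addition ∂ₜχ + (ū·∇)χ = 0, ∂ₜλ + (ū·∇)λ = 0 and ∂ₜD̄ + div(D̄ū) = 0 hold everywhere, then ξ satisfies the homogeneous u′-equation ∂ₜξ + (ū·∇)ξ − (ξ·∇)ū = 0 everywhere (so the linearized velocity fluctuation u′ also vanishes). -/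

import Mathlib

/-!
Write `A = ∇χ`, `B = ∇λ`, `W = A × B`, so that `ξ = W / D̄`. Part (i) holds because Hessians
are symmetric, which makes `div (A × B)` vanish, and because `A × B ⊥ A`.

For (ii), the material derivative `Dₜ = ∂ₜ + ū·∇` at `p = (x, t)` is the space-time derivative
in the direction `(ū p, 1)`. Differentiating `Dₜ χ = 0` in space and commuting second derivatives
gives `Dₜ ∇χ = -(∇ū)ᵀ ∇χ`, and likewise for `λ`. The identity
`Mᵀa × b + a × Mᵀb = (tr M) (a × b) - M (a × b)` turns this into
`Dₜ W = (∇ū) W - (div ū) W`, while the continuity equation reads `Dₜ D̄ = -D̄ div ū`.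
The two `div ū` terms cancel in `Dₜ (W / D̄) = (∇ū) (W / D̄)`, which is the homogeneous
u′-equation `Dₜ ξ = (ξ·∇) ū`.
-/

open scoped BigOperators

noncomputable section

def grad (f : (Fin 3 → ℝ) → ℝ → ℝ) (x : Fin 3 → ℝ) (t : ℝ) : Fin 3 → ℝ :=
  fun i => fderiv ℝ (fun y => f y t) x (Pi.single i 1)

def cross (a b : Fin 3 → ℝ) : Fin 3 → ℝ :=
  fun i => a (i + 1) * b (i + 2) - a (i + 2) * b (i + 1)

open Matrix

section CrossProduct
variable {R : Type*} [CommRing R]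

theorem cross_eq_crossProduct (a b : Fin 3 → ℝ) : cross a b = a ⨯₃ b := by
  ext i
  fin_cases i <;> simp [cross, cross_apply]

theorem transpose_mulVec_cross_add_cross_transpose_mulVec (M : Matrix (Fin 3) (Fin 3) R)
    (a b : Fin 3 → R) :
    (Mᵀ *ᵥ a) ⨯₃ b + a ⨯₃ (Mᵀ *ᵥ b) = M.trace • (a ⨯₃ b) - M *ᵥ (a ⨯₃ b) := by
  ext i
  fin_cases i <;> simp [cross_apply, mulVec, dotProduct, Fin.sum_univ_three, trace] <;> ring

theorem sum_mulVec_single_cross_apply_of_isSymm {H : Matrix (Fin 3) (Fin 3) R} (hH : H.IsSymm)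
    (b : Fin 3 → R) : ∑ i, ((H *ᵥ Pi.single i 1) ⨯₃ b) i = 0 := by
  simp [cross_apply, Fin.sum_univ_three, hH.apply 0 1, hH.apply 0 2, hH.apply 1 2]

end CrossProduct

section Calculus
variable {E G : Type*} [NormedAddCommGroup E] [NormedSpace ℝ E]
  [NormedAddCommGroup G] [NormedSpace ℝ G]

theorem fderiv_comp_prodMk_left_apply {F : E × ℝ → G} {x : E} {t : ℝ}
    (hF : DifferentiableAt ℝ F (x, t)) (v : E) :
    fderiv ℝ (fun y => F (y, t)) x v = fderiv ℝ F (x, t) (v, 0) := by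
  have h : HasFDerivAt (fun y => F (y, t))
      ((fderiv ℝ F (x, t)).comp (ContinuousLinearMap.inl ℝ E ℝ)) x :=
    hF.hasFDerivAt.comp x (hasFDerivAt_prodMk_left x t)
  rw [h.fderiv]
  rfl

theorem deriv_comp_prodMk_right {F : E × ℝ → G} {x : E} {t : ℝ}
    (hF : DifferentiableAt ℝ F (x, t)) :
    deriv (fun s => F (x, s)) t = fderiv ℝ F (x, t) (0, 1) := by
  have h : HasFDerivAt (fun s => F (x, s))
      ((fderiv ℝ F (x, t)).comp (ContinuousLinearMap.inr ℝ E ℝ)) t :=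
    hF.hasFDerivAt.comp t (hasFDerivAt_prodMk_right x t)
  rw [← fderiv_apply_one_eq_deriv, h.fderiv]
  rfl

theorem deriv_comp_prodMk_right_add_fderiv_comp_prodMk_left {F : E × ℝ → G} {x : E} {t : ℝ}
    (hF : DifferentiableAt ℝ F (x, t)) (v : E) :
    deriv (fun s => F (x, s)) t + fderiv ℝ (fun y => F (y, t)) x v
      = fderiv ℝ F (x, t) (v, 1) := by
  rw [deriv_comp_prodMk_right hF, fderiv_comp_prodMk_left_apply hF, ← map_add, Prod.mk_add_mk,
    zero_add, add_zero]

theorem fderiv_apply_apply {ι : Type*} [Fintype ι] {V : E → ι → ℝ} {p : E}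
    (hV : DifferentiableAt ℝ V p) (i : ι) (w : E) :
    fderiv ℝ (fun q => V q i) p w = fderiv ℝ V p w i := by
  rw [fderiv_apply hV]
  rfl

theorem ContDiffAt.differentiableAt_fderiv {F : E → G} {p : E} (hF : ContDiffAt ℝ 2 F p) :
    DifferentiableAt ℝ (fderiv ℝ F) p :=
  (hF.fderiv_right (m := 1) (by norm_num)).differentiableAt one_ne_zero

theorem fderiv_fderiv_apply_comm {F : E → G} {p : E} (hF : ContDiffAt ℝ 2 F p) (v w : E) :
    fderiv ℝ (fun q => fderiv ℝ F q w) p v = fderiv ℝ (fun q => fderiv ℝ F q v) p w := by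
  simp only [fderiv_clm_apply hF.differentiableAt_fderiv (differentiableAt_const _),
    fderiv_const_apply, ContinuousLinearMap.comp_zero, zero_add, ContinuousLinearMap.flip_apply]
  exact hF.isSymmSndFDerivAt (by simp) v w

theorem DifferentiableAt.crossProduct {A B : E → Fin 3 → ℝ} {p : E}
    (hA : DifferentiableAt ℝ A p) (hB : DifferentiableAt ℝ B p) :
    DifferentiableAt ℝ (fun q => A q ⨯₃ B q) p :=
  ((_root_.crossProduct (R := ℝ)).toContinuousBilinearMap.hasFDerivAt_of_bilinear hA.hasFDerivAt
    hB.hasFDerivAt).differentiableAt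

theorem fderiv_crossProduct {A B : E → Fin 3 → ℝ} {p : E}
    (hA : DifferentiableAt ℝ A p) (hB : DifferentiableAt ℝ B p) (w : E) :
    fderiv ℝ (fun q => A q ⨯₃ B q) p w = fderiv ℝ A p w ⨯₃ B p + A p ⨯₃ fderiv ℝ B p w := by
  rw [show (fun q => A q ⨯₃ B q)
      = fun q => (crossProduct (R := ℝ)).toContinuousBilinearMap (A q) (B q) from rfl,
    ContinuousLinearMap.fderiv_of_bilinear _ hA hB]
  simp [add_comm]

end Calculus

abbrev SpaceTime (n : ℕ) := (Fin n → ℝ) × ℝ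

section SpatialCalculus
variable {n : ℕ}

def spatialGrad (F : SpaceTime n → ℝ) (p : SpaceTime n) : Fin n → ℝ :=
  fun i => fderiv ℝ F p (Pi.single i 1, 0)

def spatialJacobian (U : SpaceTime n → Fin n → ℝ) (p : SpaceTime n) :
    Matrix (Fin n) (Fin n) ℝ :=
  Matrix.of fun i j => fderiv ℝ U p (Pi.single j 1, 0) i

def spatialDiv (V : SpaceTime n → Fin n → ℝ) (p : SpaceTime n) : ℝ :=
  ∑ i, fderiv ℝ (fun q => V q i) p (Pi.single i 1, 0)

theorem fderiv_apply_mk_zero_eq_sum {G : Type*} [NormedAddCommGroup G] [NormedSpace ℝ G]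
    (F : SpaceTime n → G) (p : SpaceTime n) (v : Fin n → ℝ) :
    fderiv ℝ F p (v, 0) = ∑ j, v j • fderiv ℝ F p (Pi.single j 1, 0) := by
  have hv : ((v, 0) : SpaceTime n) = ∑ j, v j • ((Pi.single j 1 : Fin n → ℝ), (0 : ℝ)) := by
    ext <;> simp [Prod.fst_sum, Prod.snd_sum, Finset.sum_apply, Pi.single_apply]
  rw [hv, map_sum]
  simp only [map_smul]

theorem fderiv_apply_mk_zero_eq_dotProduct (F : SpaceTime n → ℝ) (p : SpaceTime n)
    (v : Fin n → ℝ) : fderiv ℝ F p (v, 0) = v ⬝ᵥ spatialGrad F p := by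
  rw [fderiv_apply_mk_zero_eq_sum]
  simp [dotProduct, spatialGrad]

theorem spatialJacobian_mulVec (U : SpaceTime n → Fin n → ℝ) (p : SpaceTime n)
    (v : Fin n → ℝ) : spatialJacobian U p *ᵥ v = fderiv ℝ U p (v, 0) := by
  ext i
  rw [fderiv_apply_mk_zero_eq_sum]
  simp [mulVec, dotProduct, spatialJacobian, Finset.sum_apply, mul_comm]

theorem spatialJacobian_apply {U : SpaceTime n → Fin n → ℝ} {p : SpaceTime n}
    (hU : DifferentiableAt ℝ U p) (i j : Fin n) :
    spatialJacobian U p i j = fderiv ℝ (fun q => U q i) p (Pi.single j 1, 0) :=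
  (fderiv_apply_apply hU i _).symm

theorem sum_fderiv_comp_prodMk_left_eq_spatialDiv {V : SpaceTime n → Fin n → ℝ}
    {x : Fin n → ℝ} {t : ℝ} (hV : DifferentiableAt ℝ V (x, t)) :
    ∑ i, fderiv ℝ (fun y => V (y, t) i) x (Pi.single i 1) = spatialDiv V (x, t) :=
  Finset.sum_congr rfl fun i _ =>
    fderiv_comp_prodMk_left_apply (F := fun q => V q i) (differentiableAt_pi.1 hV i) _

theorem spatialDiv_mul {D : SpaceTime n → ℝ} {V : SpaceTime n → Fin n → ℝ} {p : SpaceTime n}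
    (hD : DifferentiableAt ℝ D p) (hV : DifferentiableAt ℝ V p) :
    spatialDiv (fun q i => D q * V q i) p
      = D p * (spatialJacobian V p).trace + fderiv ℝ D p (V p, 0) := by
  rw [fderiv_apply_mk_zero_eq_dotProduct, trace, Finset.mul_sum, dotProduct,
    ← Finset.sum_add_distrib]
  refine Finset.sum_congr rfl fun i _ => ?_
  rw [fderiv_fun_mul hD (differentiableAt_pi.1 hV i)]
  simp [spatialJacobian_apply hV, spatialGrad]

theorem differentiableAt_spatialGrad {F : SpaceTime n → ℝ} {p : SpaceTime n}
    (hF : ContDiffAt ℝ 2 F p) : DifferentiableAt ℝ (spatialGrad F) p :=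
  differentiableAt_pi.2 fun _ => hF.differentiableAt_fderiv.clm_apply (differentiableAt_const _)

theorem isSymm_spatialJacobian_spatialGrad {F : SpaceTime n → ℝ} {p : SpaceTime n}
    (hF : ContDiffAt ℝ 2 F p) : (spatialJacobian (spatialGrad F) p).IsSymm :=
  IsSymm.ext fun i j => by
    simp only [spatialJacobian_apply (differentiableAt_spatialGrad hF), spatialGrad]
    exact fderiv_fderiv_apply_comm hF _ _

theorem fderiv_spatialGrad_of_advected {F : SpaceTime n → ℝ} {U : SpaceTime n → Fin n → ℝ}
    {p : SpaceTime n} (hF : ContDiffAt ℝ 2 F p) (hU : DifferentiableAt ℝ U p)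
    (hadv : ∀ q, fderiv ℝ F q (U q, 1) = 0) :
    fderiv ℝ (spatialGrad F) p (U p, 1) = -((spatialJacobian U p)ᵀ *ᵥ spatialGrad F p) := by
  ext k
  have hF' := hF.differentiableAt_fderiv
  have hV : DifferentiableAt ℝ (fun q => (U q, (1 : ℝ))) p :=
    hU.prodMk (differentiableAt_const _)
  -- differentiate the advection law along `eₖ`, then swap the order of the second derivative
  have hadv_k : fderiv ℝ (fun q => fderiv ℝ F q (U q, 1)) p (Pi.single k 1, 0) = 0 := by
    simp [hadv]
  rw [fderiv_clm_apply hF' hV, hU.fderiv_prodMk (differentiableAt_const _)] at hadv_k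
  rw [← fderiv_apply_apply (differentiableAt_spatialGrad hF)]
  simp only [spatialGrad]
  rw [fderiv_fderiv_apply_comm hF, fderiv_clm_apply hF' (differentiableAt_const _)]
  simp only [_root_.add_apply, ContinuousLinearMap.comp_apply, ContinuousLinearMap.prod_apply,
    fderiv_const_apply, _root_.zero_apply, ContinuousLinearMap.flip_apply] at hadv_k ⊢
  rw [fderiv_apply_mk_zero_eq_dotProduct, ← spatialJacobian_mulVec, mulVec_single_one] at hadv_k
  rw [eq_neg_of_add_eq_zero_right hadv_k, mulVec_transpose]
  simp [vecMul, dotProduct, mul_comm]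

end SpatialCalculus

section Clebsch

def clebschDisplacement (D χ lam : SpaceTime 3 → ℝ) (p : SpaceTime 3) : Fin 3 → ℝ :=
  (D p)⁻¹ • (spatialGrad χ p ⨯₃ spatialGrad lam p)

variable {D χ lam : SpaceTime 3 → ℝ}

theorem grad_eq_spatialGrad {x : Fin 3 → ℝ} {t : ℝ} (hχ : DifferentiableAt ℝ χ (x, t)) :
    grad (fun y s => χ (y, s)) x t = spatialGrad χ (x, t) :=
  funext fun _ => fderiv_comp_prodMk_left_apply hχ _

theorem cross_grad_div_eq_clebschDisplacement {x : Fin 3 → ℝ} {t : ℝ}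
    (hχ : DifferentiableAt ℝ χ (x, t)) (hlam : DifferentiableAt ℝ lam (x, t)) (i : Fin 3) :
    cross (grad (fun y s => χ (y, s)) x t) (grad (fun y s => lam (y, s)) x t) i / D (x, t)
      = clebschDisplacement D χ lam (x, t) i := by
  rw [cross_eq_crossProduct, grad_eq_spatialGrad hχ, grad_eq_spatialGrad hlam, div_eq_inv_mul]
  rfl

variable {p : SpaceTime 3}

theorem spatialDiv_crossProduct_spatialGrad (hχ : ContDiffAt ℝ 2 χ p)
    (hlam : ContDiffAt ℝ 2 lam p) :
    spatialDiv (fun q => spatialGrad χ q ⨯₃ spatialGrad lam q) p = 0 := by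
  have hA := differentiableAt_spatialGrad hχ
  have hB := differentiableAt_spatialGrad hlam
  simp only [spatialDiv, fderiv_apply_apply (hA.crossProduct hB), fderiv_crossProduct hA hB,
    ← spatialJacobian_mulVec, Pi.add_apply, Finset.sum_add_distrib,
    ← cross_anticomm _ (spatialGrad χ p), Pi.neg_apply, Finset.sum_neg_distrib,
    sum_mulVec_single_cross_apply_of_isSymm (isSymm_spatialJacobian_spatialGrad hχ),
    sum_mulVec_single_cross_apply_of_isSymm (isSymm_spatialJacobian_spatialGrad hlam),
    neg_zero, add_zero]

theorem clebschDisplacement_dotProduct_spatialGrad :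
    clebschDisplacement D χ lam p ⬝ᵥ spatialGrad χ p = 0 := by
  rw [clebschDisplacement, smul_dotProduct, dotProduct_comm, dot_self_cross, smul_zero]

theorem differentiableAt_clebschDisplacement (hD : DifferentiableAt ℝ D p) (hDp : D p ≠ 0)
    (hχ : ContDiffAt ℝ 2 χ p) (hlam : ContDiffAt ℝ 2 lam p) :
    DifferentiableAt ℝ (clebschDisplacement D χ lam) p :=
  (hD.inv hDp).smul
    ((differentiableAt_spatialGrad hχ).crossProduct (differentiableAt_spatialGrad hlam))

theorem fderiv_clebschDisplacement_of_advected {U : SpaceTime 3 → Fin 3 → ℝ}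
    (hD : DifferentiableAt ℝ D p) (hDp : D p ≠ 0) (hχ : ContDiffAt ℝ 2 χ p)
    (hlam : ContDiffAt ℝ 2 lam p) (hU : DifferentiableAt ℝ U p)
    (hχadv : ∀ q, fderiv ℝ χ q (U q, 1) = 0) (hlamadv : ∀ q, fderiv ℝ lam q (U q, 1) = 0)
    (hcont : fderiv ℝ D p (U p, 1) + D p * (spatialJacobian U p).trace = 0) :
    fderiv ℝ (clebschDisplacement D χ lam) p (U p, 1)
      = spatialJacobian U p *ᵥ clebschDisplacement D χ lam p := by
  have hA := differentiableAt_spatialGrad hχ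
  have hB := differentiableAt_spatialGrad hlam
  have hinv : HasFDerivAt (fun q => (D q)⁻¹)
      ((ContinuousLinearMap.toSpanSingleton ℝ (-(D p ^ 2)⁻¹)).comp (fderiv ℝ D p)) p :=
    (hasFDerivAt_inv hDp).comp p hD.hasFDerivAt
  have hcoeff :
      fderiv ℝ D p (U p, 1) * -(D p ^ 2)⁻¹ = (D p)⁻¹ * (spatialJacobian U p).trace := by
    rw [eq_neg_of_add_eq_zero_left hcont]
    field_simp
  unfold clebschDisplacement
  rw [fderiv_fun_smul (c := fun q => (D q)⁻¹) (hD.inv hDp) (hA.crossProduct hB), hinv.fderiv]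
  simp only [_root_.add_apply, _root_.smul_apply, ContinuousLinearMap.smulRight_apply,
    ContinuousLinearMap.comp_apply, ContinuousLinearMap.toSpanSingleton_apply, smul_eq_mul]
  rw [fderiv_crossProduct hA hB, fderiv_spatialGrad_of_advected hχ hU hχadv,
    fderiv_spatialGrad_of_advected hlam hU hlamadv, map_neg, map_neg, LinearMap.neg_apply,
    ← neg_add, transpose_mulVec_cross_add_cross_transpose_mulVec, hcoeff, mulVec_smul]
  module

theorem clebschDisplacement_frozen_in {U : SpaceTime 3 → Fin 3 → ℝ} (hD : Differentiable ℝ D)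
    (hD0 : ∀ p, D p ≠ 0) (hχ : ContDiff ℝ 2 χ) (hlam : ContDiff ℝ 2 lam)
    (hU : Differentiable ℝ U)
    (hχadv : ∀ x t, deriv (fun s => χ (x, s)) t + fderiv ℝ (fun y => χ (y, t)) x (U (x, t)) = 0)
    (hlamadv :
      ∀ x t, deriv (fun s => lam (x, s)) t + fderiv ℝ (fun y => lam (y, t)) x (U (x, t)) = 0)
    (hcont : ∀ x t, deriv (fun s => D (x, s)) t
      + ∑ i, fderiv ℝ (fun y => D (y, t) * U (y, t) i) x (Pi.single i 1) = 0)
    (x : Fin 3 → ℝ) (t : ℝ) (i : Fin 3) :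
    deriv (fun s => clebschDisplacement D χ lam (x, s) i) t
      + fderiv ℝ (fun y => clebschDisplacement D χ lam (y, t) i) x (U (x, t))
      - fderiv ℝ (fun y => U (y, t) i) x (clebschDisplacement D χ lam (x, t)) = 0 := by
  have advected (F : SpaceTime 3 → ℝ) (hF : Differentiable ℝ F)
      (h : ∀ x t, deriv (fun s => F (x, s)) t + fderiv ℝ (fun y => F (y, t)) x (U (x, t)) = 0) :
      ∀ q, fderiv ℝ F q (U q, 1) = 0 := fun ⟨x, t⟩ => by
    rw [← deriv_comp_prodMk_right_add_fderiv_comp_prodMk_left (hF _)]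
    exact h x t
  have hcont' := hcont x t
  rw [sum_fderiv_comp_prodMk_left_eq_spatialDiv (V := fun q i => D q * U q i)
      ((hD _).smul (hU _)), spatialDiv_mul (hD _) (hU _),
    ← fderiv_comp_prodMk_left_apply (hD (x, t)), ← add_assoc, add_right_comm,
    deriv_comp_prodMk_right_add_fderiv_comp_prodMk_left (hD _)] at hcont'
  have hΞ := differentiableAt_clebschDisplacement (hD (x, t)) (hD0 _) hχ.contDiffAt hlam.contDiffAt
  rw [deriv_comp_prodMk_right_add_fderiv_comp_prodMk_left
      (F := fun q => clebschDisplacement D χ lam q i) (differentiableAt_pi.1 hΞ i),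
    fderiv_comp_prodMk_left_apply (F := fun q => U q i) (differentiableAt_pi.1 (hU _) i),
    fderiv_apply_apply hΞ, fderiv_apply_apply (hU _), ← spatialJacobian_mulVec,
    fderiv_clebschDisplacement_of_advected (hD _) (hD0 _) hχ.contDiffAt hlam.contDiffAt (hU _)
      (advected χ (hχ.differentiable two_ne_zero) hχadv)
      (advected lam (hlam.differentiable two_ne_zero) hlamadv) hcont',
    sub_self]

end Clebsch

/-- **Frozen-in (homogeneous) solutions of the linearized fluctuation relations
in Clebsch form.**  With `ξ := (∇χ × ∇λ)/D̄`:
(i) `div(D̄ξ) = 0` and `(ξ·∇)χ = 0` identically; and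
(ii) if `χ, λ` are advected scalars and `D̄` satisfies the continuity equation,
then `ξ` satisfies the homogeneous u′-equation `∂ₜξ + (ū·∇)ξ − (ξ·∇)ū = 0`. -/
theorem clebsch_frozen_in_fluctuations
    (Dbar χ lam : (Fin 3 → ℝ) → ℝ → ℝ)
    (ubar : (Fin 3 → ℝ) → ℝ → (Fin 3 → ℝ))
    -- smoothness
    (hD : ContDiff ℝ (⊤ : ℕ∞) (fun p : (Fin 3 → ℝ) × ℝ => Dbar p.1 p.2))
    (hχ : ContDiff ℝ (⊤ : ℕ∞) (fun p : (Fin 3 → ℝ) × ℝ => χ p.1 p.2))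
    (hlam : ContDiff ℝ (⊤ : ℕ∞) (fun p : (Fin 3 → ℝ) × ℝ => lam p.1 p.2))
    (hu : ContDiff ℝ (⊤ : ℕ∞) (fun p : (Fin 3 → ℝ) × ℝ => ubar p.1 p.2))
    -- positivity of the density
    (hDpos : ∀ x t, 0 < Dbar x t)
    -- ξ := (∇χ × ∇λ)/D̄
    (ξ : (Fin 3 → ℝ) → ℝ → (Fin 3 → ℝ))
    (hξdef : ∀ x t i, ξ x t i = cross (grad χ x t) (grad lam x t) i / Dbar x t) :
    -- (i) div(D̄ξ) = 0 and (ξ·∇)χ = 0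
    ((∀ x t, ∑ i, fderiv ℝ (fun y => Dbar y t * ξ y t i) x (Pi.single i 1) = 0)
      ∧ ∀ x t, fderiv ℝ (fun y => χ y t) x (ξ x t) = 0)
    -- (ii) under the advection/continuity assumptions, the homogeneous u′-equation
    ∧ ((∀ x t, deriv (fun s => χ x s) t + fderiv ℝ (fun y => χ y t) x (ubar x t) = 0) →
       (∀ x t, deriv (fun s => lam x s) t + fderiv ℝ (fun y => lam y t) x (ubar x t) = 0) →
       (∀ x t, deriv (fun s => Dbar x s) t
          + ∑ i, fderiv ℝ (fun y => Dbar y t * ubar y t i) x (Pi.single i 1) = 0) →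
       ∀ x t i,
         deriv (fun s => ξ x s i) t
           + fderiv ℝ (fun y => ξ y t i) x (ubar x t)
           - fderiv ℝ (fun y => ubar y t i) x (ξ x t) = 0) := by
  obtain ⟨D, rfl⟩ : ∃ D : SpaceTime 3 → ℝ, Dbar = fun x t => D (x, t) :=
    ⟨fun p => Dbar p.1 p.2, rfl⟩
  obtain ⟨X, rfl⟩ : ∃ X : SpaceTime 3 → ℝ, χ = fun x t => X (x, t) := ⟨fun p => χ p.1 p.2, rfl⟩
  obtain ⟨L, rfl⟩ : ∃ L : SpaceTime 3 → ℝ, lam = fun x t => L (x, t) :=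
    ⟨fun p => lam p.1 p.2, rfl⟩
  obtain ⟨U, rfl⟩ : ∃ U : SpaceTime 3 → Fin 3 → ℝ, ubar = fun x t => U (x, t) :=
    ⟨fun p => ubar p.1 p.2, rfl⟩
  simp only [Prod.mk.eta] at hD hχ hlam hu hDpos hξdef ⊢
  have hX : ContDiff ℝ 2 X := hχ.of_le (WithTop.coe_le_coe.2 le_top)
  have hL : ContDiff ℝ 2 L := hlam.of_le (WithTop.coe_le_coe.2 le_top)
  have hD0 : ∀ p, D p ≠ 0 := fun p => (hDpos p.1 p.2).ne'
  obtain rfl : ξ = fun x t => clebschDisplacement D X L (x, t) := funext₂ fun x t => funext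
    fun i => (hξdef x t i).trans <| cross_grad_div_eq_clebschDisplacement
      (hX.differentiable two_ne_zero _) (hL.differentiable two_ne_zero _) i
  refine ⟨⟨fun x t => ?_, fun x t => ?_⟩, clebschDisplacement_frozen_in
    (hD.differentiable (by simp)) hD0 hX hL (hu.differentiable (by simp))⟩
  · simp only [clebschDisplacement, Pi.smul_apply, smul_eq_mul, mul_inv_cancel_left₀ (hD0 _)]
    rw [sum_fderiv_comp_prodMk_left_eq_spatialDiv
        ((differentiableAt_spatialGrad hX.contDiffAt).crossProduct
          (differentiableAt_spatialGrad hL.contDiffAt)),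
      spatialDiv_crossProduct_spatialGrad hX.contDiffAt hL.contDiffAt]
  · rw [fderiv_comp_prodMk_left_apply (hX.differentiable two_ne_zero _),
      fderiv_apply_mk_zero_eq_dotProduct, clebschDisplacement_dotProduct_spatialGrad]
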